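/- Let C₁, C₂, …, C_N be computers (N ≥ 1) and let T ∈ (0,1). Then Z_{C₁⊘⋯⊘C_N}(T) = Z_{C₁}(T)⋯Z_{C_N}(T), F_{C₁⊘⋯⊘C_N}(T) = F_{C₁}(T) + ⋯ + F_{C_N}(T), E_{C₁⊘⋯⊘C_N}(T) = E_{C₁}(T) + ⋯ + E_{C_N}(T), and S_{C₁⊘⋯⊘C_N}(T) = S_{C₁}(T) + ⋯ + S_{C_N}(T). -/

import Mathlib

open Filter Topology

/-- A set of finite binary strings is prefix-free if no string in it is a
proper prefix of another string in it. -/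
def PrefixFree (S : Set (List Bool)) : Prop :=
  ∀ p ∈ S, ∀ q ∈ S, p <+: q → p = q

/-- A computer: a partial recursive function from finite binary strings to
finite binary strings whose domain is a nonempty prefix-free set. -/
structure Computer where
  f : List Bool →. List Bool
  partrec : Partrec f
  dom_nonempty : f.Dom.Nonempty
  dom_prefixFree : PrefixFree f.Dom

/-- A computer `U` is optimal if for each computer `C` there is `d ∈ ℕ` such
that every `p ∈ Dom C` admits `q` with `U(q) = C(p)` and `|q| ≤ |p| + d`. -/
def Optimal (U : Computer) : Prop :=
  ∀ C : Computer, ∃ d : ℕ, ∀ p ∈ C.f.Dom,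
    ∃ q : List Bool, U.f q = C.f p ∧ q.length ≤ p.length + d

/-- `H_C(s)`: the length of a shortest program for `C` printing `s`. -/
noncomputable def complexity (C : Computer) (s : List Bool) : ℕ :=
  sInf {n | ∃ p : List Bool, s ∈ C.f p ∧ p.length = n}

/-- The `i`-th bit (for `i = 0, 1, 2, …`) of the base-two expansion of
`α - ⌊α⌋` with infinitely many zeros. -/
noncomputable def bitOf (α : ℝ) (i : ℕ) : Bool :=
  decide (⌊(α - ⌊α⌋) * 2 ^ (i + 1)⌋ % 2 = 1)

/-- `α↾n`: the first `n` bits of the base-two expansion of `α - ⌊α⌋`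
with infinitely many zeros. -/
noncomputable def firstBits (α : ℝ) (n : ℕ) : List Bool :=
  (List.range n).map (bitOf α)

/-- A real `α` is computable if some total recursive `f : ℕ⁺ → ℚ` satisfies
`|α - f n| < 1/n` for all `n ≥ 1`. -/
def ComputableReal (α : ℝ) : Prop :=
  ∃ f : ℕ → ℚ, Computable f ∧ ∀ n : ℕ, 0 < n → |α - (f n : ℝ)| < 1 / n

/-- `α` is weakly Chaitin `T`-random (w.r.t. the computer `U`). -/
def WeaklyChaitinTRandom (U : Computer) (T α : ℝ) : Prop :=
  ∃ c : ℕ, ∀ n : ℕ, 0 < n → T * n - c ≤ (complexity U (firstBits α n) : ℝ)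

/-- `α` is Chaitin `T`-random (w.r.t. the computer `U`). -/
def ChaitinTRandom (U : Computer) (T α : ℝ) : Prop :=
  Tendsto (fun n : ℕ => (complexity U (firstBits α n) : ℝ) - T * n) atTop atTop

/-- `α` is `T`-compressible (w.r.t. the computer `U`): `H(α↾n) ≤ Tn + o(n)`. -/
def TCompressible (U : Computer) (T α : ℝ) : Prop :=
  ∃ g : ℕ → ℝ, Tendsto (fun n : ℕ => g n / n) atTop (nhds 0) ∧
    ∀ n : ℕ, 0 < n → (complexity U (firstBits α n) : ℝ) ≤ T * n + g n

/-- The Boltzmann factor `2^(-|p|/T)` of a program `p`. -/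
noncomputable def boltzmann (T : ℝ) (p : List Bool) : ℝ :=
  (2 : ℝ) ^ (-(p.length : ℝ) / T)

/-- Partition function `Z_C(T) = Σ_{p ∈ Dom C} 2^(-|p|/T)`. -/
noncomputable def Zfun (C : Computer) (T : ℝ) : ℝ :=
  ∑' p : C.f.Dom, boltzmann T p.1

/-- Free energy `F_C(T) = -T log₂ Z_C(T)`. -/
noncomputable def Ffun (C : Computer) (T : ℝ) : ℝ :=
  -T * Real.logb 2 (Zfun C T)

/-- Energy `E_C(T) = Z_C(T)⁻¹ Σ_{p ∈ Dom C} |p| 2^(-|p|/T)`. -/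
noncomputable def Efun (C : Computer) (T : ℝ) : ℝ :=
  (Zfun C T)⁻¹ * ∑' p : C.f.Dom, (p.1.length : ℝ) * boltzmann T p.1

/-- Statistical mechanical entropy `S_C(T) = (E_C(T) - F_C(T))/T`. -/
noncomputable def Sfun (C : Computer) (T : ℝ) : ℝ :=
  (Efun C T - Ffun C T) / T

/-- `𝒵(V)`: the set of `T ∈ (0,1)` with `Z_V(T)` computable. -/
def setZ (V : Computer) : Set ℝ := {T | T ∈ Set.Ioo 0 1 ∧ ComputableReal (Zfun V T)}

/-- `ℱ(V)`: the set of `T ∈ (0,1)` with `F_V(T)` computable. -/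
def setF (V : Computer) : Set ℝ := {T | T ∈ Set.Ioo 0 1 ∧ ComputableReal (Ffun V T)}

/-- `ℰ(V)`: the set of `T ∈ (0,1)` with `E_V(T)` computable. -/
def setE (V : Computer) : Set ℝ := {T | T ∈ Set.Ioo 0 1 ∧ ComputableReal (Efun V T)}

/-- `𝒮(V)`: the set of `T ∈ (0,1)` with `S_V(T)` computable. -/
def setS (V : Computer) : Set ℝ := {T | T ∈ Set.Ioo 0 1 ∧ ComputableReal (Sfun V T)}

/-- `FP_w` (w.r.t. the optimal computer `U` fixing `H`): the set of `T ∈ (0,1)`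
that are weakly Chaitin `T`-random and `T`-compressible. -/
def FPw (U : Computer) : Set ℝ :=
  {T | T ∈ Set.Ioo 0 1 ∧ WeaklyChaitinTRandom U T T ∧ TCompressible U T T}

/-- `FP` (w.r.t. the optimal computer `U` fixing `H`): the set of `T ∈ (0,1)`
that are Chaitin `T`-random and `T`-compressible. -/
def FP (U : Computer) : Set ℝ :=
  {T | T ∈ Set.Ioo 0 1 ∧ ChaitinTRandom U T T ∧ TCompressible U T T}

/-- A computer is physically reasonable if its domain contains two strings of
different lengths. -/
def PhysicallyReasonable (C : Computer) : Prop :=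
  ∃ p ∈ C.f.Dom, ∃ q ∈ C.f.Dom, p.length ≠ q.length

/-- A computable measure machine: `Z_C(1)` is a computable real. -/
def ComputableMeasureMachine (C : Computer) : Prop :=
  ComputableReal (Zfun C 1)

/-- `D` is the composition `C₀ ⊘ C₁ ⊘ ⋯ ⊘ C_{N-1}`: its domain consists of the
concatenations `p₀p₁⋯p_{N-1}` with each `pᵢ ∈ Dom Cᵢ`, and on such a
concatenation it returns `C₀(p₀)`. -/
def IsComposition {N : ℕ} (C : Fin N → Computer) (hN : 0 < N) (D : Computer) : Prop :=
  (∀ l, l ∈ D.f.Dom ↔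
      ∃ ps : Fin N → List Bool, (∀ i, ps i ∈ (C i).f.Dom) ∧ l = (List.ofFn ps).flatten) ∧
  (∀ ps : Fin N → List Bool, (∀ i, ps i ∈ (C i).f.Dom) →
      D.f ((List.ofFn ps).flatten) = (C ⟨0, hN⟩).f (ps ⟨0, hN⟩))

/-- A sequence of computers is recursive if a single partial recursive function
uniformly computes all of them. -/
def RecursiveSeq (V : ℕ → Computer) : Prop :=
  ∃ F : ℕ × List Bool →. List Bool, Partrec F ∧ ∀ n p, (V n).f p = F (n, p)

/-! Concatenation `(p₁, …, p_N) ↦ p₁⋯p_N` is a bijection from `Dom C₁ × ⋯ × Dom C_N` onto the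
domain of the composition (injective because each `Dom Cᵢ` is prefix-free); it adds lengths and
multiplies Boltzmann factors. Hence `Z` is multiplicative, and the length-weighted sum `W` of the
composition splits as `∑ᵢ Wᵢ ∏_{j ≠ i} Zⱼ`, so that `E = W / Z` is additive; `F` and `S` follow. For
`T < 1` every series converges: the strings of length `n` contribute `nᵏ (2^(1 - 1/T))ⁿ`. -/

open Finset

theorem Finset.prod_ite_eq_mul_prod_sdiff_singleton {ι M : Type*} [CommMonoid M] [DecidableEq ι]
    {s : Finset ι} {i : ι} (hi : i ∈ s) (a b : ι → M) :
    ∏ j ∈ s, (if j = i then a j else b j) = a i * ∏ j ∈ s \ {i}, b j := by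
  rw [← Finset.prod_update_of_mem hi]
  exact Finset.prod_congr rfl fun j _ => by split_ifs with h <;> simp [h]

section PiProd

theorem ENNReal.tsum_pi_prod :
    ∀ {N : ℕ} {α : Fin N → Type*} (g : ∀ i, α i → ENNReal),
      ∑' f : ∀ i, α i, ∏ i, g i (f i) = ∏ i, ∑' x, g i x
  | 0, _, g => by simp
  | n + 1, α, g => by
    rw [← (Fin.consEquiv α).tsum_eq, ENNReal.tsum_prod', Fin.prod_univ_succ,
      ← ENNReal.tsum_pi_prod (fun i => g i.succ), ← ENNReal.tsum_mul_right]
    refine tsum_congr fun a => ?_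
    rw [← ENNReal.tsum_mul_left]
    refine tsum_congr fun f => ?_
    simp [Fin.consEquiv, Fin.prod_univ_succ]

variable {N : ℕ} {α : Fin N → Type*}

theorem tsum_pi_prod_of_nonneg (g : ∀ i, α i → ℝ) (hg : ∀ i x, 0 ≤ g i x) :
    ∑' f : ∀ i, α i, ∏ i, g i (f i) = ∏ i, ∑' x, g i x := by
  -- no summability is needed: pass to `ℝ≥0∞`, where `toReal` commutes with sums of finite terms
  calc ∑' f : ∀ i, α i, ∏ i, g i (f i)
      = (∑' f : ∀ i, α i, ∏ i, ENNReal.ofReal (g i (f i))).toReal := by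
        rw [ENNReal.tsum_toReal_eq fun _ => ENNReal.prod_ne_top fun _ _ => ENNReal.ofReal_ne_top]
        simp only [ENNReal.toReal_prod, ENNReal.toReal_ofReal (hg _ _)]
    _ = ∏ i, ∑' x, g i x := by
        rw [ENNReal.tsum_pi_prod fun i x => ENNReal.ofReal (g i x), ENNReal.toReal_prod]
        simp only [ENNReal.tsum_toReal_eq fun _ => ENNReal.ofReal_ne_top,
          ENNReal.toReal_ofReal (hg _ _)]

theorem hasSum_pi_prod_of_nonneg (g : ∀ i, α i → ℝ) (hg : ∀ i x, 0 ≤ g i x)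
    (hsum : ∀ i, Summable (g i)) :
    HasSum (fun f : ∀ i, α i => ∏ i, g i (f i)) (∏ i, ∑' x, g i x) := by
  have hfin : ∑' f : ∀ i, α i, ∏ i, ENNReal.ofReal (g i (f i)) ≠ ⊤ := by
    rw [ENNReal.tsum_pi_prod fun i x => ENNReal.ofReal (g i x)]
    exact ENNReal.prod_ne_top fun i _ =>
      (ENNReal.ofReal_tsum_of_nonneg (hg i) (hsum i)).symm ▸ ENNReal.ofReal_ne_top
  have hsummable := ENNReal.summable_toReal hfin
  simp only [ENNReal.toReal_prod, ENNReal.toReal_ofReal (hg _ _)] at hsummable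
  exact tsum_pi_prod_of_nonneg g hg ▸ hsummable.hasSum

theorem hasSum_sum_mul_pi_prod_of_nonneg (ℓ w : ∀ i, α i → ℝ) (hℓ : ∀ i x, 0 ≤ ℓ i x)
    (hw : ∀ i x, 0 ≤ w i x) (hℓw : ∀ i, Summable fun x => ℓ i x * w i x)
    (hwsum : ∀ i, Summable (w i)) :
    HasSum (fun f : ∀ i, α i => (∑ i, ℓ i (f i)) * ∏ i, w i (f i))
      (∑ i, (∑' x, ℓ i x * w i x) * ∏ j ∈ univ \ {i}, ∑' x, w j x) := by
  classical
  simp_rw [Finset.sum_mul]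
  refine hasSum_sum fun i _ => ?_
  -- in the `i`-th summand the `i`-th weight `w i` is replaced by `ℓ i * w i`
  have hg := hasSum_pi_prod_of_nonneg (fun j x => if j = i then ℓ j x * w j x else w j x)
    (fun j x => by split_ifs; exacts [mul_nonneg (hℓ j x) (hw j x), hw j x])
    (fun j => by split_ifs <;> simp_all)
  convert hg using 1
  · funext f
    rw [Finset.prod_ite_eq_mul_prod_sdiff_singleton (mem_univ i),
      Finset.prod_eq_mul_prod_sdiff_singleton_of_mem (mem_univ i), mul_assoc]
  · rw [← Finset.prod_ite_eq_mul_prod_sdiff_singleton (mem_univ i)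
      (fun j => ∑' x, ℓ j x * w j x) fun j => ∑' x, w j x]
    exact Finset.prod_congr rfl fun j _ => by split_ifs <;> rfl

end PiProd

section Boltzmann

theorem boltzmann_pos (T : ℝ) (p : List Bool) : 0 < boltzmann T p :=
  Real.rpow_pos_of_pos two_pos _

theorem boltzmann_flatten_ofFn (T : ℝ) {N : ℕ} (ps : Fin N → List Bool) :
    boltzmann T (List.ofFn ps).flatten = ∏ i, boltzmann T (ps i) := by
  simp only [boltzmann, List.length_flatten, List.map_ofFn, List.sum_ofFn]
  rw [← Real.rpow_sum_of_pos two_pos]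
  push_cast
  simp [neg_div, Finset.sum_div]

theorem summable_comp_length {g : ℕ → ℝ} (hg : ∀ n, 0 ≤ g n)
    (h : Summable fun n => 2 ^ n * g n) : Summable fun p : List Bool => g p.length := by
  rw [← (List.equivSigmaTuple (α := Bool)).symm.summable_iff]
  refine (summable_sigma_of_nonneg fun _ => hg _).2 ⟨fun _ => Summable.of_finite, ?_⟩
  simpa [Function.comp_def, List.equivSigmaTuple, tsum_const, Nat.card_eq_fintype_card] using h

theorem summable_length_pow_mul_boltzmann {T : ℝ} (hT : T ∈ Set.Ioo (0 : ℝ) 1) (k : ℕ) :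
    Summable fun p : List Bool => (p.length : ℝ) ^ k * boltzmann T p := by
  obtain ⟨hT0, hT1⟩ := hT
  set r : ℝ := 2 ^ (1 - 1 / T)
  have hr : ‖r‖ < 1 := by
    rw [Real.norm_of_nonneg (by positivity)]
    exact Real.rpow_lt_one_of_one_lt_of_neg one_lt_two (by rw [sub_neg, lt_div_iff₀ hT0]; linarith)
  refine summable_comp_length (g := fun n => (n : ℝ) ^ k * 2 ^ (-(n : ℝ) / T))
    (fun n => by positivity) ((summable_pow_mul_geometric_of_norm_lt_one k hr).congr fun n => ?_)
  rw [← Real.rpow_natCast r, ← Real.rpow_mul zero_le_two, ← Real.rpow_natCast 2 n, mul_left_comm,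
    ← Real.rpow_add two_pos]
  ring_nf

end Boltzmann

namespace Computer

variable (C : Computer) {T : ℝ}

theorem summable_boltzmann (hT : T ∈ Set.Ioo (0 : ℝ) 1) :
    Summable fun p : C.f.Dom => boltzmann T p.1 :=
  ((summable_length_pow_mul_boltzmann hT 0).subtype _).congr fun p => by simp

theorem summable_length_mul_boltzmann (hT : T ∈ Set.Ioo (0 : ℝ) 1) :
    Summable fun p : C.f.Dom => (p.1.length : ℝ) * boltzmann T p.1 :=
  ((summable_length_pow_mul_boltzmann hT 1).subtype _).congr fun p => by simp

theorem Zfun_pos (hT : T ∈ Set.Ioo (0 : ℝ) 1) : 0 < Zfun C T :=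
  (C.summable_boltzmann hT).tsum_pos (fun p => (boltzmann_pos T p.1).le)
    ⟨_, C.dom_nonempty.some_mem⟩ (boltzmann_pos T _)

end Computer

theorem PrefixFree.append_inj {S : Set (List Bool)} (hS : PrefixFree S) {p q a b : List Bool}
    (hp : p ∈ S) (hq : q ∈ S) (h : p ++ a = q ++ b) : p = q ∧ a = b := by
  obtain rfl : p = q := by
    rcases List.append_eq_append_iff.1 h with ⟨r, rfl, -⟩ | ⟨r, rfl, -⟩
    · exact hS p hp _ hq (List.prefix_append p r)
    · exact (hS q hq _ hp (List.prefix_append q r)).symm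
  exact ⟨rfl, List.append_cancel_left h⟩

theorem PrefixFree.flatten_ofFn_inj : ∀ {N : ℕ} {S : Fin N → Set (List Bool)},
    (∀ i, PrefixFree (S i)) → ∀ {ps qs : Fin N → List Bool}, (∀ i, ps i ∈ S i) →
      (∀ i, qs i ∈ S i) → (List.ofFn ps).flatten = (List.ofFn qs).flatten → ps = qs
  | 0, _, _, _, _, _, _, _ => funext fun i => i.elim0
  | _ + 1, _, hS, ps, qs, hps, hqs, h => by
    rw [List.ofFn_succ, List.ofFn_succ, List.flatten_cons, List.flatten_cons] at h
    obtain ⟨h0, htail⟩ := (hS 0).append_inj (hps 0) (hqs 0) h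
    have := PrefixFree.flatten_ofFn_inj (fun i => hS i.succ) (fun i => hps i.succ)
      (fun i => hqs i.succ) htail
    exact funext fun i => Fin.cases h0 (congrFun this) i

namespace IsComposition

variable {N : ℕ} {hN : 0 < N} {C : Fin N → Computer} {D : Computer}

noncomputable def domEquiv (hD : IsComposition C hN D) : (∀ i, (C i).f.Dom) ≃ D.f.Dom :=
  Equiv.ofBijective
    (fun ps => ⟨(List.ofFn fun i => (ps i).1).flatten, (hD.1 _).2 ⟨_, fun i => (ps i).2, rfl⟩⟩)
    ⟨fun ps qs h => funext fun i => Subtype.ext <| congrFun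
        (PrefixFree.flatten_ofFn_inj (fun i => (C i).dom_prefixFree) (fun i => (ps i).2)
          (fun i => (qs i).2) (congrArg Subtype.val h)) i,
      fun ⟨_, hp⟩ => by
        obtain ⟨ps, hps, rfl⟩ := (hD.1 _).1 hp
        exact ⟨fun i => ⟨ps i, hps i⟩, rfl⟩⟩

theorem tsum_dom (hD : IsComposition C hN D) (g : List Bool → ℝ) :
    ∑' p : D.f.Dom, g p = ∑' ps : ∀ i, (C i).f.Dom, g (List.ofFn fun i => (ps i).1).flatten :=
  (hD.domEquiv.tsum_eq fun p => g p).symm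

theorem Zfun_eq_prod (hD : IsComposition C hN D) (T : ℝ) : Zfun D T = ∏ i, Zfun (C i) T := by
  rw [Zfun, hD.tsum_dom]
  simp_rw [boltzmann_flatten_ofFn]
  exact tsum_pi_prod_of_nonneg (fun i (p : (C i).f.Dom) => boltzmann T p.1)
    fun i p => (boltzmann_pos T p.1).le

theorem tsum_length_mul_boltzmann (hD : IsComposition C hN D) {T : ℝ}
    (hT : T ∈ Set.Ioo (0 : ℝ) 1) :
    ∑' p : D.f.Dom, (p.1.length : ℝ) * boltzmann T p.1
      = ∑ i, (∑' p : (C i).f.Dom, (p.1.length : ℝ) * boltzmann T p.1) *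
          ∏ j ∈ univ \ {i}, Zfun (C j) T := by
  rw [hD.tsum_dom fun p => (p.length : ℝ) * boltzmann T p]
  simp_rw [boltzmann_flatten_ofFn, List.length_flatten, List.map_ofFn, List.sum_ofFn]
  push_cast
  exact (hasSum_sum_mul_pi_prod_of_nonneg (fun i (p : (C i).f.Dom) => (p.1.length : ℝ))
    (fun i (p : (C i).f.Dom) => boltzmann T p.1) (fun i p => Nat.cast_nonneg _)
    (fun i p => (boltzmann_pos T p.1).le) (fun i => (C i).summable_length_mul_boltzmann hT)
    (fun i => (C i).summable_boltzmann hT)).tsum_eq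

theorem Ffun_eq_sum (hD : IsComposition C hN D) {T : ℝ} (hT : T ∈ Set.Ioo (0 : ℝ) 1) :
    Ffun D T = ∑ i, Ffun (C i) T := by
  rw [Ffun, hD.Zfun_eq_prod, Real.logb_prod _ _ fun i _ => ((C i).Zfun_pos hT).ne', mul_sum]
  rfl

theorem Efun_eq_sum (hD : IsComposition C hN D) {T : ℝ} (hT : T ∈ Set.Ioo (0 : ℝ) 1) :
    Efun D T = ∑ i, Efun (C i) T := by
  rw [Efun, hD.tsum_length_mul_boltzmann hT, hD.Zfun_eq_prod, mul_sum]
  refine sum_congr rfl fun i _ => ?_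
  have hZi := ((C i).Zfun_pos hT).ne'
  have hZrest : ∏ j ∈ univ \ {i}, Zfun (C j) T ≠ 0 :=
    prod_ne_zero_iff.2 fun j _ => ((C j).Zfun_pos hT).ne'
  rw [prod_eq_mul_prod_sdiff_singleton_of_mem (mem_univ i), Efun]
  field_simp

end IsComposition

/-- For `T ∈ (0,1)`, the thermodynamic quantities of a
composition are the product (for `Z`) resp. sums (for `F`, `E`, `S`) of those
of the components. -/
theorem composition_thermodynamic_quantities {N : ℕ} (hN : 0 < N)
    (C : Fin N → Computer) (D : Computer) (hD : IsComposition C hN D)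
    (T : ℝ) (hT : T ∈ Set.Ioo (0 : ℝ) 1) :
    Zfun D T = ∏ i, Zfun (C i) T ∧
    Ffun D T = ∑ i, Ffun (C i) T ∧
    Efun D T = ∑ i, Efun (C i) T ∧
    Sfun D T = ∑ i, Sfun (C i) T := by
  refine ⟨hD.Zfun_eq_prod T, hD.Ffun_eq_sum hT, hD.Efun_eq_sum hT, ?_⟩
  simp only [Sfun, hD.Efun_eq_sum hT, hD.Ffun_eq_sum hT, ← sum_sub_distrib, sum_div]
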